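/- arXiv:1512.05699 — 2 statements merged into one kernel-verified Lean document; each statement's English description precedes it below -/
import Mathlib

section
/- Suppose a sequence (a_n) of nonnegative reals satisfies, for a fixed integer m ≥ 2 and constant K₂ > 0, a_{m²n} ≤ m·a_{mn} + K₂·max(√(n ln n), 1) for all n, and a_n/n → γ*. Then there is a constant K₃ such that for all n ≥ 2, m·n·γ* ≤ a_{mn} + K₃·√(n ln n). -/
/-!
Put `b k = a(m^{k+1} n) / (m^{k+1} n)`. Dividing the recursion at `m^k n` by `m^{k+2} n` gives
`b (k+1) ≤ b k + (K₂/m²) √(log(m^k n) / (m^k n))`, and since `log n ≥ log 2`,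
`log(m^k n) ≤ (1 + k log m / log 2) log n`; so the error is at most `(K₂/m²) w k √(log n / n)`
with `w k = (1 + k log m / log 2) / √(m^k)` summable and independent of `n`. As `b k → γ`,
telescoping gives `γ ≤ b 0 + (K₂/m²) (∑ w) √(log n / n)`, i.e. the claim with `K₃ = (K₂/m) ∑ w`.
-/

open Filter Real Topology

theorem le_add_tsum_of_tendsto_of_le_add {b e : ℕ → ℝ} {γ : ℝ} (hb : Tendsto b atTop (𝓝 γ))
    (he : Summable e) (he₀ : ∀ k, 0 ≤ e k) (hstep : ∀ k, b (k + 1) ≤ b k + e k) :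
    γ ≤ b 0 + ∑' k, e k := by
  have hpartial : ∀ N, b N ≤ b 0 + ∑ k ∈ Finset.range N, e k := by
    intro N
    induction N with
    | zero => simp
    | succ N ih => rw [Finset.sum_range_succ]; linarith [hstep N]
  refine le_of_tendsto' hb fun N => (hpartial N).trans ?_
  gcongr
  exact he.sum_le_tsum _ fun k _ => he₀ k

theorem sqrt_pow_eq_pow_sqrt {q : ℝ} (hq : 0 ≤ q) (k : ℕ) : √(q ^ k) = √q ^ k := by
  rw [← sqrt_sq (pow_nonneg (sqrt_nonneg q) k), ← pow_mul, mul_comm, pow_mul, sq_sqrt hq]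

theorem mul_sqrt_div_self {x : ℝ} (hx : 0 ≤ x) (y : ℝ) : x * √(y / x) = √(x * y) := by
  rcases hx.eq_or_lt with rfl | hx
  · simp
  rw [← sqrt_sq hx.le, ← sqrt_mul (sq_nonneg x), sqrt_sq hx.le]
  congr 1
  field_simp

theorem one_le_mul_log {x : ℝ} (hx : 2 ≤ x) : 1 ≤ x * log x := by
  have hlog : 1 / 2 ≤ log 2 := by linarith [log_two_gt_d9]
  nlinarith [log_le_log (by norm_num) hx]

theorem sqrt_log_mul_div_le {x y : ℝ} (hx : 2 ≤ x) (hy : 1 ≤ y) :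
    √(log (x * y) / (x * y)) ≤ (1 + log y / log 2) / √y * √(log x / x) := by
  have hlog2 : 0 < log 2 := log_pos one_lt_two
  have ht : 1 ≤ 1 + log y / log 2 := le_add_of_nonneg_right (div_nonneg (log_nonneg hy) hlog2.le)
  have hlog_mul : log (x * y) ≤ (1 + log y / log 2) * log x := by
    rw [log_mul (by linarith) (by linarith), add_mul, one_mul, div_mul_eq_mul_div]
    gcongr
    rw [le_div_iff₀ hlog2]
    exact mul_le_mul_of_nonneg_left (log_le_log two_pos hx) (log_nonneg hy)
  calc √(log (x * y) / (x * y))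
      ≤ √((1 + log y / log 2) * log x / (x * y)) := by gcongr
    _ = √(1 + log y / log 2) / √y * √(log x / x) := by
        rw [← sqrt_div' _ (by linarith : (0 : ℝ) ≤ y), ← sqrt_mul (by positivity)]
        congr 1
        field_simp
    _ ≤ (1 + log y / log 2) / √y * √(log x / x) := by
        gcongr
        exact sqrt_le_self_iff.mpr (Or.inr ht)

noncomputable def logGeomWeight (q : ℝ) (k : ℕ) : ℝ := (1 + k * (log q / log 2)) / √(q ^ k)

theorem logGeomWeight_nonneg {q : ℝ} (hq : 1 ≤ q) (k : ℕ) : 0 ≤ logGeomWeight q k := by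
  have : 0 ≤ log q := log_nonneg hq
  unfold logGeomWeight
  positivity

theorem summable_logGeomWeight {q : ℝ} (hq : 1 < q) : Summable (logGeomWeight q) := by
  have hr : ‖(√q)⁻¹‖ < 1 := by
    rw [norm_inv, norm_of_nonneg (sqrt_nonneg q)]
    refine inv_lt_one_of_one_lt₀ ?_
    rw [← sqrt_one]
    gcongr
  have hgeom := summable_geometric_of_norm_lt_one hr
  have harith := (summable_pow_mul_geometric_of_norm_lt_one 1 hr).mul_right (log q / log 2)
  refine (hgeom.add harith).congr fun k => ?_
  rw [logGeomWeight, sqrt_pow_eq_pow_sqrt (by linarith), div_eq_mul_inv, inv_pow]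
  ring

theorem sqrt_log_mul_pow_div_le {x q : ℝ} (hx : 2 ≤ x) (hq : 1 ≤ q) (k : ℕ) :
    √(log (x * q ^ k) / (x * q ^ k)) ≤ logGeomWeight q k * √(log x / x) := by
  simpa only [logGeomWeight, log_pow, mul_div_assoc] using sqrt_log_mul_div_le hx (one_le_pow₀ hq : 1 ≤ q ^ k)

theorem div_le_div_add_of_le_mul_add {a : ℕ → ℝ} {m : ℕ} (hm : 0 < m) {K₂ : ℝ}
    (hrec : ∀ n : ℕ, 1 ≤ n → a (m ^ 2 * n) ≤ m * a (m * n) + K₂ * max (√(n * log n)) 1)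
    {N : ℕ} (hN : 2 ≤ N) :
    a (m ^ 2 * N) / ↑(m ^ 2 * N) ≤ a (m * N) / ↑(m * N) + K₂ / m ^ 2 * √(log N / N) := by
  have hN' : (2 : ℝ) ≤ N := by exact_mod_cast hN
  have hmax : max (√(N * log N)) 1 = N * √(log N / N) := by
    rw [mul_sqrt_div_self (by positivity), max_eq_left]
    exact one_le_sqrt.mpr (one_le_mul_log hN')
  have h := hrec N (by omega)
  rw [hmax] at h
  have hm' : (0 : ℝ) < m := by exact_mod_cast hm
  push_cast
  rw [div_le_iff₀ (by positivity)]
  refine h.trans_eq ?_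
  field_simp

theorem div_le_div_add_logGeomWeight {a : ℕ → ℝ} {m n : ℕ} (hm : 1 < m) (hn : 2 ≤ n) {K₂ : ℝ}
    (hK₂ : 0 ≤ K₂)
    (hrec : ∀ n : ℕ, 1 ≤ n → a (m ^ 2 * n) ≤ m * a (m * n) + K₂ * max (√(n * log n)) 1)
    (k : ℕ) :
    a (m * (m ^ (k + 1) * n)) / ↑(m * (m ^ (k + 1) * n)) ≤
      a (m * (m ^ k * n)) / ↑(m * (m ^ k * n)) + K₂ / m ^ 2 * √(log n / n) * logGeomWeight m k := by
  have hn' : (2 : ℝ) ≤ n := by exact_mod_cast hn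
  have hm' : (1 : ℝ) ≤ m := by exact_mod_cast hm.le
  have hgrowth : √(log ↑(m ^ k * n) / ↑(m ^ k * n)) ≤ logGeomWeight m k * √(log n / n) := by
    push_cast
    rw [mul_comm _ (n : ℝ)]
    exact sqrt_log_mul_pow_div_le hn' hm' k
  have hidx : m * (m ^ (k + 1) * n) = m ^ 2 * (m ^ k * n) := by ring
  calc a (m * (m ^ (k + 1) * n)) / ↑(m * (m ^ (k + 1) * n))
      = a (m ^ 2 * (m ^ k * n)) / ↑(m ^ 2 * (m ^ k * n)) := by rw [hidx]
    _ ≤ a (m * (m ^ k * n)) / ↑(m * (m ^ k * n)) +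
          K₂ / m ^ 2 * √(log ↑(m ^ k * n) / ↑(m ^ k * n)) :=
        div_le_div_add_of_le_mul_add (by omega) hrec
          (le_mul_of_one_le_of_le (Nat.one_le_pow _ _ (by omega)) hn)
    _ ≤ _ := by
        rw [mul_assoc, mul_comm (√(log n / n))]
        gcongr

theorem stmt7_general (a : ℕ → ℝ)
    (m : ℕ) (hm : 2 ≤ m) (K₂ : ℝ) (hK₂ : 0 < K₂)
    (hrec : ∀ n : ℕ, 1 ≤ n →
      a (m ^ 2 * n) ≤ m * a (m * n) + K₂ * max (Real.sqrt (n * Real.log n)) 1)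
    (γ : ℝ) (hlim : Tendsto (fun n : ℕ => a n / n) atTop (nhds γ)) :
    ∃ K₃ : ℝ, ∀ n : ℕ, 2 ≤ n →
      (m : ℝ) * n * γ ≤ a (m * n) + K₃ * Real.sqrt (n * Real.log n) := by
  have hm' : (1 : ℝ) < m := by exact_mod_cast hm
  refine ⟨K₂ / m * ∑' k, logGeomWeight m k, fun n hn => ?_⟩
  have hsub : Tendsto (fun k => m * (m ^ k * n)) atTop atTop :=
    tendsto_atTop_mono
      (fun k => le_mul_of_one_le_of_le (by omega) (Nat.le_mul_of_pos_right _ (by omega)))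
      (tendsto_pow_atTop_atTop_of_one_lt (by omega : 1 < m))
  have hγ := le_add_tsum_of_tendsto_of_le_add (hlim.comp hsub)
    ((summable_logGeomWeight hm').mul_left _)
    (fun k => mul_nonneg (by positivity) (logGeomWeight_nonneg hm'.le k))
    (div_le_div_add_logGeomWeight (by omega) hn hK₂.le hrec)
  rw [tsum_mul_left] at hγ
  have hn' : (0 : ℝ) < n := by positivity
  calc (m : ℝ) * n * γ
      ≤ m * n * (a (m * n) / (m * n) + K₂ / m ^ 2 * √(log n / n) * ∑' k, logGeomWeight m k) := by
        simpa [Function.comp_def] using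
          mul_le_mul_of_nonneg_left hγ (by positivity : (0 : ℝ) ≤ m * n)
    _ = a (m * n) + K₂ / m * (∑' k, logGeomWeight m k) * (n * √(log n / n)) := by
        field_simp
    _ = a (m * n) + K₂ / m * (∑' k, logGeomWeight m k) * √(n * log n) := by
        rw [mul_sqrt_div_self hn'.le]

theorem stmt7 (a : ℕ → ℝ) (ha : ∀ n, 0 ≤ a n)
    (m : ℕ) (hm : 2 ≤ m) (K₂ : ℝ) (hK₂ : 0 < K₂)
    (hrec : ∀ n : ℕ, 1 ≤ n →
      a (m ^ 2 * n) ≤ m * a (m * n) + K₂ * max (Real.sqrt (n * Real.log n)) 1)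
    (γ : ℝ) (hlim : Tendsto (fun n : ℕ => a n / n) atTop (nhds γ)) :
    ∃ K₃ : ℝ, ∀ n : ℕ, 2 ≤ n →
      (m : ℝ) * n * γ ≤ a (m * n) + K₃ * Real.sqrt (n * Real.log n) :=
  stmt7_general a m hm K₂ hK₂ hrec γ hlim
end

section
/- The function γ̃* : {(q_1,...,q_m) : q_j > 0, Σ q_j = m} → ℝ defined as the limit of (1/n)·E(L(X^(1)_1,...,X^(1)_{nq_1};...;X^(m)_1,...,X^(m)_{nq_m})) is concave on its domain. -/
/-!
Concatenating an alignment of the first `ℓ` letters of each word with one of the next `ℓ'`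
letters gives an alignment of the whole words, so the optimal score is superadditive under
concatenation; since disjoint blocks of i.i.d. words are again i.i.d. words, so is its
expectation `expLV`. Applying this to blocks of lengths `⌈n₁ q⌉` and `⌈n₂ r⌉` with
`nᵢ ≈ cᵢ N`, which fit into lengths `⌈N (c₁ q + c₂ r)⌉`, dividing by `N` and letting
`N → ∞` gives the concavity inequality.

When `S` is not almost everywhere measurable, the Bochner integrals are `0` by convention and
the inequality holds because all of them vanish: on constant words the optimal score is a
positive multiple of `S`, and for a countable alphabet the embedding of constant words is
quasi-measure-preserving, so the optimal score is not almost everywhere measurable either.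
-/

open MeasureTheory Filter

noncomputable def alignScore {A : Type*} {m n k : ℕ} (S : (Fin m → A) → ℝ)
    (w : Fin m → Fin n → A) (π : Fin m → Fin k → Fin n) : ℝ :=
  ∑ i : Fin k, S (fun j => w j (π j i))

noncomputable def optScore {A : Type*} (m n : ℕ) (S : (Fin m → A) → ℝ)
    (w : Fin m → Fin n → A) : ℝ :=
  sSup {x : ℝ | ∃ (k : ℕ) (π : Fin m → Fin k → Fin n),
    (∀ j, StrictMono (π j)) ∧ x = alignScore S w π}

def PermInvariant {A : Type*} {m : ℕ} (S : (Fin m → A) → ℝ) : Prop :=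
  ∀ (σ : Equiv.Perm (Fin m)) (x : Fin m → A), S (x ∘ σ) = S x

def BddDiffOne {A : Type*} {m : ℕ} (S : (Fin m → A) → ℝ) (D : ℝ) : Prop :=
  ∀ x y : Fin m → A, (∃ j₀, ∀ j, j ≠ j₀ → x j = y j) → |S x - S y| ≤ D

noncomputable def wordMeasure {A : Type*} [MeasurableSpace A] (p : Measure A) (m n : ℕ) :
    Measure (Fin m → Fin n → A) :=
  Measure.pi fun _ => Measure.pi fun _ => p

noncomputable def expL {A : Type*} [MeasurableSpace A] (p : Measure A) (m n : ℕ)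
    (S : (Fin m → A) → ℝ) : ℝ :=
  ∫ w, optScore m n S w ∂(wordMeasure p m n)

noncomputable def optScoreV {A : Type*} (m : ℕ) (ℓ : Fin m → ℕ) (S : (Fin m → A) → ℝ)
    (w : ∀ j : Fin m, Fin (ℓ j) → A) : ℝ :=
  sSup {x : ℝ | ∃ (k : ℕ) (π : ∀ j : Fin m, Fin k → Fin (ℓ j)),
    (∀ j, StrictMono (π j)) ∧ x = ∑ i : Fin k, S (fun j => w j (π j i))}

noncomputable def wordMeasureV {A : Type*} [MeasurableSpace A] (p : Measure A) {m : ℕ}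
    (ℓ : Fin m → ℕ) : Measure (∀ j : Fin m, Fin (ℓ j) → A) :=
  Measure.pi fun _ => Measure.pi fun _ => p

noncomputable def expLV {A : Type*} [MeasurableSpace A] (p : Measure A) {m : ℕ}
    (ℓ : Fin m → ℕ) (S : (Fin m → A) → ℝ) : ℝ :=
  ∫ w, optScoreV m ℓ S w ∂(wordMeasureV p ℓ)

noncomputable def blockScore {A : Type*} {m n : ℕ} (S : (Fin m → A) → ℝ)
    (w : Fin m → Fin n → A) (lo hi : Fin m → ℕ) : ℝ :=
  sSup {x : ℝ | ∃ (k : ℕ) (π : Fin m → Fin k → Fin n),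
    (∀ j, StrictMono (π j)) ∧ (∀ j i, lo j ≤ (π j i : ℕ) ∧ (π j i : ℕ) < hi j) ∧
    x = ∑ i : Fin k, S (fun j => w j (π j i))}

open Topology

section MeasurableAtom

variable {X Y : Type*} [MeasurableSpace X] [MeasurableSpace Y]

theorem pi_measurableAtom_subset {ι : Type*} {Z : ι → Type*} [∀ i, MeasurableSpace (Z i)]
    (x : ∀ i, Z i) : Set.univ.pi (fun i => measurableAtom (x i)) ⊆ measurableAtom x := by
  intro y hy
  -- the sets that do not separate `x` from `y` form a σ-algebra
  let unseparating : MeasurableSpace (∀ i, Z i) :=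
    { MeasurableSet' := fun M => (x ∈ M ↔ y ∈ M)
      measurableSet_empty := by simp
      measurableSet_compl := fun _ h => not_congr h
      measurableSet_iUnion := fun _ h => by simp only [Set.mem_iUnion]; exact exists_congr h }
  have hle : MeasurableSpace.pi ≤ unseparating := by
    refine iSup_le fun i => ?_
    rintro _ ⟨s, hs, rfl⟩
    have hxy : x i ∈ measurableAtom (y i) := by
      rw [measurableAtom_eq_of_mem (hy i trivial)]; exact mem_measurableAtom_self _
    exact ⟨fun h => mem_of_mem_measurableAtom (hy i trivial) hs h,
      fun h => mem_of_mem_measurableAtom hxy hs h⟩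
  simp only [measurableAtom, Set.mem_iInter]
  exact fun M hxM hM => (hle M hM).mp hxM

theorem quasiMeasurePreserving_of_measurableAtom [Countable X] {μ : Measure X} {ν : Measure Y}
    {f : X → Y} (hf : Measurable f)
    (h : ∀ x, ν (measurableAtom (f x)) = 0 → μ (measurableAtom x) = 0) :
    Measure.QuasiMeasurePreserving f μ ν := by
  refine ⟨hf, Measure.AbsolutelyContinuous.mk fun M hM hνM => ?_⟩
  rw [Measure.map_apply hf hM]
  refine measure_mono_null (fun x hx => Set.mem_biUnion hx (mem_measurableAtom_self x))
    ((measure_biUnion_null_iff (Set.to_countable _)).2 fun x hx => h x ?_)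
  exact measure_mono_null (measurableAtom_subset hM hx) hνM

theorem quasiMeasurePreserving_const_words {A ι : Type*} [Countable A] [MeasurableSpace A]
    [Fintype ι] {κ : ι → Type*} [∀ i, Fintype (κ i)] (p : Measure A) [SigmaFinite p] :
    Measure.QuasiMeasurePreserving (fun (x : ι → A) i (_ : κ i) => x i)
      (Measure.pi fun _ => p) (Measure.pi fun i => Measure.pi fun _ : κ i => p) := by
  refine quasiMeasurePreserving_of_measurableAtom (by fun_prop) fun x hν => ?_
  by_contra hμ
  have hbox : measurableAtom x ⊆ Set.univ.pi fun i => measurableAtom (x i) :=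
    measurableAtom_subset (.univ_pi fun i => .measurableAtom_of_countable _)
      fun i _ => mem_measurableAtom_self _
  have hpos : ∀ i, p (measurableAtom (x i)) ≠ 0 := fun i h0 =>
    hμ (measure_mono_null hbox (by rw [Measure.pi_pi]; exact Finset.prod_eq_zero (by simp) h0))
  have hsub : (Set.univ.pi fun i => Set.univ.pi fun _ : κ i => measurableAtom (x i)) ⊆
      measurableAtom fun i (_ : κ i) => x i :=
    (Set.pi_mono fun i _ => pi_measurableAtom_subset _).trans (pi_measurableAtom_subset _)
  refine measure_mono_null hsub hν |>.not_gt ?_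
  simp only [Measure.pi_pi]
  exact pos_iff_ne_zero.2 (Finset.prod_ne_zero_iff.2 fun i _ =>
    Finset.prod_ne_zero_iff.2 fun _ _ => hpos i)

end MeasurableAtom

theorem measurePreserving_comp_injective {A κ κ' : Type*} [MeasurableSpace A] [Fintype κ]
    [Fintype κ'] (p : Measure A) [IsProbabilityMeasure p] {τ : κ → κ'}
    (hτ : Function.Injective τ) :
    MeasurePreserving (fun w : κ' → A => w ∘ τ)
      (Measure.pi fun _ => p) (Measure.pi fun _ => p) := by
  classical
  let e : κ ≃ {c // ∃ i, τ i = c} := Equiv.ofInjective τ hτ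
  exact ((measurePreserving_piCongrLeft (fun _ => p) e).symm _).comp
    (measurePreserving_fst.comp (measurePreserving_piEquivPiSubtypeProd (fun _ => p) _))

theorem Fin.strictMono_append {α : Type*} [Preorder α] {k k' : ℕ} {f : Fin k → α}
    {g : Fin k' → α} (hf : StrictMono f) (hg : StrictMono g) (hfg : ∀ i i', f i < g i') :
    StrictMono (Fin.append f g) := by
  intro a b hab
  induction a using Fin.addCases with
  | left a =>
    induction b using Fin.addCases with
    | left b => simpa using hf ((Fin.strictMono_castAdd k').lt_iff_lt.1 hab)
    | right b => simpa using hfg a b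
  | right a =>
    induction b using Fin.addCases with
    | left b =>
      refine absurd hab (not_lt.2 (Fin.le_def.2 ?_))
      simp only [Fin.val_castAdd, Fin.val_natAdd]
      omega
    | right b => simpa using hg ((Fin.natAdd_lt_natAdd_iff k).1 hab)

section Alignment

variable {A : Type*} {m : ℕ}

abbrev WordAlignment (ℓ : Fin m → ℕ) : Type :=
  Σ k : ℕ, {π : ∀ j, Fin k → Fin (ℓ j) // ∀ j, StrictMono (π j)}

namespace WordAlignment

variable {ℓ ℓ' L : Fin m → ℕ} (S : (Fin m → A) → ℝ)

def score (w : ∀ j, Fin (ℓ j) → A) (a : WordAlignment ℓ) : ℝ :=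
  ∑ i : Fin a.1, S fun j => w j (a.2.1 j i)

instance : Nonempty (WordAlignment ℓ) :=
  ⟨⟨0, fun _ => Fin.elim0, fun _ i => i.elim0⟩⟩

theorem length_le (a : WordAlignment ℓ) (j : Fin m) : a.1 ≤ ℓ j := by
  simpa using Fintype.card_le_of_injective _ (a.2.2 j).injective

theorem score_le_mul {C : ℝ} (hSb : ∀ x, S x ≤ C) (hC : 0 ≤ C) (w : ∀ j, Fin (ℓ j) → A)
    (a : WordAlignment ℓ) (j : Fin m) : a.score S w ≤ ℓ j * C :=
  calc a.score S w ≤ ∑ _i : Fin a.1, C := Finset.sum_le_sum fun i _ => hSb _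
    _ = a.1 * C := by simp
    _ ≤ ℓ j * C := by gcongr; exact_mod_cast a.length_le j

theorem score_const (x : Fin m → A) (a : WordAlignment ℓ) :
    a.score S (fun j _ => x j) = a.1 * S x := by
  simp [score]

def leftIncl (hL : ∀ j, ℓ j + ℓ' j ≤ L j) (j : Fin m) : Fin (ℓ j) → Fin (L j) :=
  Fin.castLE (hL j) ∘ Fin.castAdd (ℓ' j)

def rightIncl (hL : ∀ j, ℓ j + ℓ' j ≤ L j) (j : Fin m) : Fin (ℓ' j) → Fin (L j) :=
  Fin.castLE (hL j) ∘ Fin.natAdd (ℓ j)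

def append (hL : ∀ j, ℓ j + ℓ' j ≤ L j) (a : WordAlignment ℓ) (b : WordAlignment ℓ') :
    WordAlignment L :=
  ⟨a.1 + b.1,
    fun j => Fin.castLE (hL j) ∘ Fin.append (Fin.castAdd _ ∘ a.2.1 j) (Fin.natAdd _ ∘ b.2.1 j),
    fun j => (Fin.strictMono_castLE _).comp <|
      Fin.strictMono_append ((Fin.strictMono_castAdd _).comp (a.2.2 j))
        ((Fin.strictMono_natAdd _).comp (b.2.2 j)) fun i i' => Fin.lt_def.2 <| by
          simp only [Function.comp_apply, Fin.val_castAdd, Fin.val_natAdd]; omega⟩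

theorem score_append (hL : ∀ j, ℓ j + ℓ' j ≤ L j) (w : ∀ j, Fin (L j) → A)
    (a : WordAlignment ℓ) (b : WordAlignment ℓ') :
    (append hL a b).score S w =
      a.score S (fun j => w j ∘ leftIncl hL j) + b.score S (fun j => w j ∘ rightIncl hL j) := by
  change ∑ i : Fin (a.1 + b.1), _ = _
  simp [score, append, leftIncl, rightIncl, Fin.sum_univ_add]

end WordAlignment

open WordAlignment

variable {ℓ ℓ' L : Fin m → ℕ} {S : (Fin m → A) → ℝ}

theorem optScoreV_eq_iSup (w : ∀ j, Fin (ℓ j) → A) :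
    optScoreV m ℓ S w = ⨆ a : WordAlignment ℓ, a.score S w := by
  rw [optScoreV, iSup]
  congr 1
  ext x
  constructor
  · rintro ⟨k, π, hπ, rfl⟩
    exact ⟨⟨k, π, hπ⟩, rfl⟩
  · rintro ⟨⟨k, π, hπ⟩, rfl⟩
    exact ⟨k, π, hπ, rfl⟩

variable {C : ℝ}

theorem optScoreV_le (hSb : ∀ x, S x ≤ C) (w : ∀ j, Fin (ℓ j) → A) (j : Fin m) :
    optScoreV m ℓ S w ≤ ℓ j * max C 0 := by
  rw [optScoreV_eq_iSup]
  exact ciSup_le fun a => a.score_le_mul S (fun x => (hSb x).trans (le_max_left C 0))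
    (le_max_right C 0) w j

variable [Nonempty (Fin m)]

theorem bddAbove_range_score (hSb : ∀ x, S x ≤ C) (w : ∀ j, Fin (ℓ j) → A) :
    BddAbove (Set.range fun a : WordAlignment ℓ => a.score S w) :=
  ⟨_, Set.forall_mem_range.2 fun a => a.score_le_mul S
    (fun x => (hSb x).trans (le_max_left C 0)) (le_max_right C 0) w (Classical.arbitrary _)⟩

theorem optScoreV_nonneg (hS0 : ∀ x, 0 ≤ S x) (hSb : ∀ x, S x ≤ C) (w : ∀ j, Fin (ℓ j) → A) :
    0 ≤ optScoreV m ℓ S w := by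
  rw [optScoreV_eq_iSup]
  exact (Finset.sum_nonneg fun i _ => hS0 _).trans
    (le_ciSup (bddAbove_range_score hSb w) (Classical.arbitrary _))

theorem optScoreV_add_le (hSb : ∀ x, S x ≤ C) (hL : ∀ j, ℓ j + ℓ' j ≤ L j)
    (w : ∀ j, Fin (L j) → A) :
    optScoreV m ℓ S (fun j => w j ∘ leftIncl hL j) +
        optScoreV m ℓ' S (fun j => w j ∘ rightIncl hL j) ≤ optScoreV m L S w := by
  simp only [optScoreV_eq_iSup]
  refine ciSup_add_ciSup_le fun a b => ?_
  rw [← score_append]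
  exact le_ciSup (bddAbove_range_score hSb w) _

theorem optScoreV_const (hS0 : ∀ x, 0 ≤ S x) (x : Fin m → A) :
    optScoreV m ℓ S (fun j _ => x j) = (⨅ j, ℓ j : ℕ) * S x := by
  have hle (a : WordAlignment ℓ) : a.score S (fun j _ => x j) ≤ (⨅ j, ℓ j : ℕ) * S x := by
    rw [score_const]
    gcongr
    · exact hS0 x
    · exact_mod_cast le_ciInf a.length_le
  rw [optScoreV_eq_iSup]
  refine le_antisymm (ciSup_le hle) ?_
  let a : WordAlignment ℓ := ⟨⨅ j, ℓ j, fun j => Fin.castLE (ciInf_le (OrderBot.bddBelow _) j),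
    fun j => Fin.strictMono_castLE _⟩
  exact (score_const S x a).symm.le.trans (le_ciSup ⟨_, Set.forall_mem_range.2 hle⟩ a)

end Alignment

section Expectation

variable {A : Type*} [MeasurableSpace A] (p : Measure A) [IsProbabilityMeasure p] {m : ℕ}
  {ℓ ℓ' L : Fin m → ℕ} {S : (Fin m → A) → ℝ} {C : ℝ}

open WordAlignment

instance : IsProbabilityMeasure (wordMeasureV p ℓ) := by
  unfold wordMeasureV; infer_instance

theorem aemeasurable_optScoreV (hS : AEMeasurable S (Measure.pi fun _ => p)) :
    AEMeasurable (optScoreV m ℓ S) (wordMeasureV p ℓ) := by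
  simp_rw [funext optScoreV_eq_iSup]
  refine AEMeasurable.iSup fun a => Finset.aemeasurable_fun_sum _ fun i _ => ?_
  exact hS.comp_quasiMeasurePreserving
    (measurePreserving_pi _ _ fun j => measurePreserving_eval _ (a.2.1 j i)).quasiMeasurePreserving

theorem integrable_optScoreV (hS0 : ∀ x, 0 ≤ S x) (hSb : ∀ x, S x ≤ C)
    (hS : AEMeasurable S (Measure.pi fun _ => p)) [Nonempty (Fin m)] :
    Integrable (optScoreV m ℓ S) (wordMeasureV p ℓ) := by
  refine .of_bound (aemeasurable_optScoreV p hS).aestronglyMeasurable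
    (ℓ (Classical.arbitrary _) * max C 0) (ae_of_all _ fun w => ?_)
  rw [Real.norm_eq_abs, abs_of_nonneg (optScoreV_nonneg hS0 hSb w)]
  exact optScoreV_le hSb w _

theorem integral_optScoreV_comp {f : (∀ j, Fin (L j) → A) → (∀ j, Fin (ℓ j) → A)}
    (hf : MeasurePreserving f (wordMeasureV p L) (wordMeasureV p ℓ))
    (hS0 : ∀ x, 0 ≤ S x) (hSb : ∀ x, S x ≤ C) (hS : AEMeasurable S (Measure.pi fun _ => p))
    [Nonempty (Fin m)] :
    ∫ w, optScoreV m ℓ S (f w) ∂wordMeasureV p L = expLV p ℓ S := by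
  have hmeas := (integrable_optScoreV p hS0 hSb hS (ℓ := ℓ)).aestronglyMeasurable
  rw [← hf.map_eq] at hmeas
  rw [expLV, ← hf.map_eq, integral_map hf.aemeasurable hmeas]

theorem expLV_add_le_of_aemeasurable (hS0 : ∀ x, 0 ≤ S x) (hSb : ∀ x, S x ≤ C)
    (hS : AEMeasurable S (Measure.pi fun _ => p)) [Nonempty (Fin m)]
    (hL : ∀ j, ℓ j + ℓ' j ≤ L j) :
    expLV p ℓ S + expLV p ℓ' S ≤ expLV p L S := by
  have hleft : MeasurePreserving (fun (w : ∀ j, Fin (L j) → A) j => w j ∘ leftIncl hL j)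
      (wordMeasureV p L) (wordMeasureV p ℓ) :=
    measurePreserving_pi _ _ fun j => measurePreserving_comp_injective p <|
      (Fin.castLE_injective _).comp (Fin.castAdd_injective _ _)
  have hright : MeasurePreserving (fun (w : ∀ j, Fin (L j) → A) j => w j ∘ rightIncl hL j)
      (wordMeasureV p L) (wordMeasureV p ℓ') :=
    measurePreserving_pi _ _ fun j => measurePreserving_comp_injective p <|
      (Fin.castLE_injective _).comp (Fin.natAdd_injective _ _)
  have hint_left : Integrable (fun w => optScoreV m ℓ S fun j => w j ∘ leftIncl hL j)
      (wordMeasureV p L) :=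
    hleft.integrable_comp_of_integrable (integrable_optScoreV p hS0 hSb hS)
  have hint_right : Integrable (fun w => optScoreV m ℓ' S fun j => w j ∘ rightIncl hL j)
      (wordMeasureV p L) :=
    hright.integrable_comp_of_integrable (integrable_optScoreV p hS0 hSb hS)
  rw [← integral_optScoreV_comp p hleft hS0 hSb hS,
    ← integral_optScoreV_comp p hright hS0 hSb hS, ← integral_add hint_left hint_right]
  exact integral_mono_of_nonneg (ae_of_all _ fun w => add_nonneg
      (optScoreV_nonneg hS0 hSb _) (optScoreV_nonneg hS0 hSb _))
    (integrable_optScoreV p hS0 hSb hS) (ae_of_all _ fun w => optScoreV_add_le hSb hL w)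

theorem aemeasurable_of_aemeasurable_optScoreV [Countable A] [Nonempty (Fin m)]
    (hS0 : ∀ x, 0 ≤ S x) (hℓ : ∀ j, 1 ≤ ℓ j)
    (h : AEMeasurable (optScoreV m ℓ S) (wordMeasureV p ℓ)) :
    AEMeasurable S (Measure.pi fun _ => p) := by
  have hk : ((⨅ j, ℓ j : ℕ) : ℝ) ≠ 0 :=
    Nat.cast_ne_zero.2 (Nat.one_le_iff_ne_zero.1 (le_ciInf hℓ))
  have hS : S = fun x => optScoreV m ℓ S (fun j _ => x j) / (⨅ j, ℓ j : ℕ) :=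
    funext fun x => by rw [optScoreV_const hS0, mul_div_cancel_left₀ _ hk]
  rw [hS]
  exact (h.comp_quasiMeasurePreserving (quasiMeasurePreserving_const_words p)).div_const _

theorem expLV_add_le [Countable A] [Nonempty (Fin m)] (hS0 : ∀ x, 0 ≤ S x)
    (hSb : ∀ x, S x ≤ C) (hℓ : ∀ j, 1 ≤ ℓ j) (hℓ' : ∀ j, 1 ≤ ℓ' j)
    (hL : ∀ j, ℓ j + ℓ' j ≤ L j) :
    expLV p ℓ S + expLV p ℓ' S ≤ expLV p L S := by
  by_cases hS : AEMeasurable S (Measure.pi fun _ => p)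
  · exact expLV_add_le_of_aemeasurable p hS0 hSb hS hL
  have hzero {ℓ : Fin m → ℕ} (hℓ : ∀ j, 1 ≤ ℓ j) : expLV p ℓ S = 0 :=
    integral_undef fun hi =>
      hS (aemeasurable_of_aemeasurable_optScoreV p hS0 hℓ hi.aemeasurable)
  rw [hzero hℓ, hzero hℓ', hzero fun j => (hℓ j).trans ((Nat.le_add_right _ _).trans (hL j)),
    add_zero]

end Expectation

section Asymptotics

theorem Nat.ceil_add_ceil_le_ceil {x y z : ℝ} (hx : 0 ≤ x) (hy : 0 ≤ y) (h : x + y + 2 ≤ z) :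
    ⌈x⌉₊ + ⌈y⌉₊ ≤ ⌈z⌉₊ := by
  have hx' := Nat.ceil_lt_add_one hx
  have hy' := Nat.ceil_lt_add_one hy
  exact_mod_cast (by linarith [Nat.le_ceil z] : (⌈x⌉₊ + ⌈y⌉₊ : ℝ) ≤ ⌈z⌉₊)

theorem tendsto_nat_floor_mul_sub_atTop {c : ℝ} (hc : 0 < c) (K : ℝ) :
    Tendsto (fun N : ℕ => ⌊c * N - K⌋₊) atTop atTop :=
  tendsto_nat_floor_atTop.comp <| tendsto_atTop_add_const_right _ (-K)
    (tendsto_natCast_atTop_atTop.const_mul_atTop hc)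

theorem tendsto_nat_floor_mul_sub_div {c : ℝ} (hc : 0 < c) (K : ℝ) :
    Tendsto (fun N : ℕ => (⌊c * N - K⌋₊ : ℝ) / N) atTop (𝓝 c) := by
  have hlim (b : ℝ) : Tendsto (fun N : ℕ => c - b / N) atTop (𝓝 c) := by
    simpa using tendsto_const_nhds.sub (tendsto_const_div_atTop_nhds_zero_nat b)
  refine tendsto_of_tendsto_of_tendsto_of_le_of_le' (hlim (K + 1)) (hlim K) ?_ ?_
  · filter_upwards [eventually_gt_atTop 0] with N hN
    have hN' : (0 : ℝ) < N := Nat.cast_pos.2 hN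
    rw [le_div_iff₀ hN', sub_mul, div_mul_cancel₀ _ hN'.ne']
    linarith [Nat.sub_one_lt_floor (c * N - K)]
  · filter_upwards [eventually_gt_atTop 0,
      (tendsto_natCast_atTop_atTop.const_mul_atTop hc).eventually_ge_atTop K] with N hN hK
    have hN' : (0 : ℝ) < N := Nat.cast_pos.2 hN
    rw [div_le_iff₀ hN', sub_mul, div_mul_cancel₀ _ hN'.ne']
    linarith [Nat.floor_le (sub_nonneg.2 hK)]

theorem Filter.Tendsto.div_natCast_comp {f : ℕ → ℝ} {u : ℕ → ℕ} {a c : ℝ}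
    (hf : Tendsto (fun n : ℕ => f n / n) atTop (𝓝 a)) (hu : Tendsto u atTop atTop)
    (huc : Tendsto (fun N : ℕ => (u N : ℝ) / N) atTop (𝓝 c)) :
    Tendsto (fun N : ℕ => f (u N) / N) atTop (𝓝 (a * c)) := by
  refine ((hf.comp hu).mul huc).congr' ?_
  filter_upwards [hu.eventually_gt_atTop 0] with N hN
  exact div_mul_div_cancel₀ (Nat.cast_ne_zero.2 hN.ne')

theorem le_of_superadditive_of_tendsto {ι : Type*} [Fintype ι] {E : (ι → ℕ) → ℝ}
    (hE : ∀ ℓ ℓ' L : ι → ℕ, (∀ j, 1 ≤ ℓ j) → (∀ j, 1 ≤ ℓ' j) → (∀ j, ℓ j + ℓ' j ≤ L j) →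
      E ℓ + E ℓ' ≤ E L)
    {q r : ι → ℝ} (hq : ∀ j, 0 < q j) (hr : ∀ j, 0 < r j) {c₁ c₂ a b c : ℝ}
    (hc₁ : 0 < c₁) (hc₂ : 0 < c₂)
    (ha : Tendsto (fun n : ℕ => E (fun j => ⌈n * q j⌉₊) / n) atTop (𝓝 a))
    (hb : Tendsto (fun n : ℕ => E (fun j => ⌈n * r j⌉₊) / n) atTop (𝓝 b))
    (hc : Tendsto (fun n : ℕ => E (fun j => ⌈n * (c₁ * q j + c₂ * r j)⌉₊) / n) atTop
      (𝓝 c)) :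
    c₁ * a + c₂ * b ≤ c := by
  -- shrinking both blocks by `K` leaves room for the two roundings up
  set K := ∑ j, 2 / q j
  have hK : 0 ≤ K := Finset.sum_nonneg fun j _ => (div_pos two_pos (hq j)).le
  have hKq (j : ι) : 2 ≤ K * q j := by
    have := Finset.single_le_sum (fun i _ => (div_pos two_pos (hq i)).le) (Finset.mem_univ j)
    calc (2 : ℝ) = 2 / q j * q j := (div_mul_cancel₀ _ (hq j).ne').symm
      _ ≤ K * q j := by gcongr; exact (hq j).le
  set u₁ := fun N : ℕ => ⌊c₁ * N - K⌋₊
  set u₂ := fun N : ℕ => ⌊c₂ * N - K⌋₊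
  have hu₁ := tendsto_nat_floor_mul_sub_atTop hc₁ K
  have hu₂ := tendsto_nat_floor_mul_sub_atTop hc₂ K
  have hsuper : ∀ᶠ N : ℕ in atTop,
      E (fun j => ⌈(u₁ N : ℝ) * q j⌉₊) / N + E (fun j => ⌈(u₂ N : ℝ) * r j⌉₊) / N ≤
        E (fun j => ⌈N * (c₁ * q j + c₂ * r j)⌉₊) / N := by
    filter_upwards [hu₁.eventually_ge_atTop 1, hu₂.eventually_ge_atTop 1] with N h₁ h₂
    rw [← add_div]
    gcongr
    have hN₁ : (u₁ N : ℝ) ≤ c₁ * N - K := Nat.floor_le (by linarith [Nat.floor_pos.1 h₁])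
    have hN₂ : (u₂ N : ℝ) ≤ c₂ * N - K := Nat.floor_le (by linarith [Nat.floor_pos.1 h₂])
    refine hE _ _ _ (fun j => Nat.ceil_pos.2 (mul_pos (Nat.cast_pos.2 h₁) (hq j)))
      (fun j => Nat.ceil_pos.2 (mul_pos (Nat.cast_pos.2 h₂) (hr j))) fun j =>
        Nat.ceil_add_ceil_le_ceil (mul_nonneg (Nat.cast_nonneg _) (hq j).le)
          (mul_nonneg (Nat.cast_nonneg _) (hr j).le) ?_
    have h₁q := mul_le_mul_of_nonneg_right hN₁ (hq j).le
    have h₂r := mul_le_mul_of_nonneg_right hN₂ (hr j).le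
    linarith [hKq j, mul_nonneg hK (hr j).le]
  have hlim := (ha.div_natCast_comp hu₁ (tendsto_nat_floor_mul_sub_div hc₁ K)).add
    (hb.div_natCast_comp hu₂ (tendsto_nat_floor_mul_sub_div hc₂ K))
  rw [mul_comm c₁, mul_comm c₂]
  exact le_of_tendsto_of_tendsto hlim hc hsuper

end Asymptotics

theorem stmt8_general {A : Type*} [Fintype A] [MeasurableSpace A]
    (p : Measure A) [IsProbabilityMeasure p]
    (m : ℕ) (hm : 1 ≤ m) (S : (Fin m → A) → ℝ) (hS0 : ∀ x, 0 ≤ S x)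
    (sStar : ℝ) (hSb : ∀ x, S x ≤ sStar)
    (g : (Fin m → ℝ) → ℝ)
    (hg : ∀ q : Fin m → ℝ, (∀ j, 0 < q j) → (∑ j, q j) = m →
      Tendsto (fun n : ℕ => expLV p (fun j => ⌈(n : ℝ) * q j⌉₊) S / n) atTop (nhds (g q))) :
    ∀ (c₁ c₂ : ℝ) (q r : Fin m → ℝ), 0 < c₁ → 0 < c₂ → c₁ + c₂ = 1 →
      (∀ j, 0 < q j) → (∑ j, q j) = m → (∀ j, 0 < r j) → (∑ j, r j) = m →
      c₁ * g q + c₂ * g r ≤ g (fun j => c₁ * q j + c₂ * r j) := by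
  intro c₁ c₂ q r hc₁ hc₂ hc hq hq_sum hr hr_sum
  have : Nonempty (Fin m) := ⟨⟨0, hm⟩⟩
  have hs : ∀ j, 0 < c₁ * q j + c₂ * r j := fun j => by
    have := hq j; have := hr j; positivity
  have hs_sum : ∑ j, (c₁ * q j + c₂ * r j) = m := by
    rw [Finset.sum_add_distrib, ← Finset.mul_sum, ← Finset.mul_sum, hq_sum, hr_sum]
    linear_combination (m : ℝ) * hc
  exact le_of_superadditive_of_tendsto (fun _ _ _ => expLV_add_le p hS0 hSb) hq hr hc₁ hc₂
    (hg q hq hq_sum) (hg r hr hr_sum) (hg _ hs hs_sum)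

theorem stmt8 {A : Type*} [Fintype A] [Nonempty A] [MeasurableSpace A]
    (p : Measure A) [IsProbabilityMeasure p]
    (m : ℕ) (hm : 1 ≤ m) (S : (Fin m → A) → ℝ) (hS0 : ∀ x, 0 ≤ S x)
    (sStar : ℝ) (hSb : ∀ x, S x ≤ sStar) (hSperm : PermInvariant S)
    (D : ℝ) (hBD : BddDiffOne S D)
    (g : (Fin m → ℝ) → ℝ)
    (hg : ∀ q : Fin m → ℝ, (∀ j, 0 < q j) → (∑ j, q j) = m →
      Tendsto (fun n : ℕ => expLV p (fun j => ⌈(n : ℝ) * q j⌉₊) S / n) atTop (nhds (g q))) :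
    ∀ (c₁ c₂ : ℝ) (q r : Fin m → ℝ), 0 < c₁ → 0 < c₂ → c₁ + c₂ = 1 →
      (∀ j, 0 < q j) → (∑ j, q j) = m → (∀ j, 0 < r j) → (∑ j, r j) = m →
      c₁ * g q + c₂ * g r ≤ g (fun j => c₁ * q j + c₂ * r j) :=
  stmt8_general p m hm S hS0 sStar hSb g hg
end
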